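/- arXiv:1509.04043 — 2 statements merged into one kernel-verified Lean document; each statement's English description precedes it below -/
import Mathlib

section
/- Let M ≥ 1, let H be an M×M Hermitian positive-definite complex matrix and R an M×M Hermitian positive-definite complex matrix, and let α > 0, β > 0. Let m₀ < M₀ be the smallest and largest eigenvalues of H, and m₁ < M₁ the smallest and largest eigenvalues of the Hermitian matrix R^{−1/2} H R^{−1/2}. Define f₀(x) = α·log x, f₁(x) = β·(log x + eˣ·E₁(x)), κ₁ = (f₀(M₀) − f₀(m₀))/(M₀ − m₀), κ₂ = f₀(m₀) − κ₁·m₀, μ₁ = (f₁(M₁) − f₁(m₁))/(M₁ − m₁), μ₂ = f₁(m₁) − μ₁·m₁. Then for every w ∈ ℂ^M with ‖w‖ = 1, f₀(w^H H w) + f₁((w^H H w)/(w^H R w)) ≥ κ₁·(w^H H w) + κ₂ + μ₁·((w^H H w)/(w^H R w)) + μ₂. -/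
/-!
Both objectives are concave on `(0, ∞)`: for `f₁` write `φ x = log x + eˣ E₁(x)`; then
`φ' x = eˣ E₁(x)` and `φ'' x = eˣ E₁(x) - 1/x ≤ 0` because `E₁(x) ≤ e⁻ˣ / x`.
A concave function lies above its chord at every point between the chord's endpoints, so it
remains to locate the arguments: `w^H H w ∈ [m₀, M₀]` is the Rayleigh bound for the unit vector
`w`, and with `u = R^{1/2} w` one has `w^H H w = u^H C u` and `w^H R w = ‖u‖²`, so the
Rayleigh bound for `C` puts the quotient in `[m₁, M₁]`.
-/

open Matrix
open scoped ComplexOrder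

/-- The square root of a positive semidefinite matrix, as defined in the older Mathlib
(removed since): `U * diagonal (√λ) * Uᴴ` for the eigendecomposition of `A`. -/
noncomputable def Matrix.PosSemidef.sqrt {n : Type*} [Fintype n] [DecidableEq n]
    {A : Matrix n n ℂ} (hA : A.PosSemidef) : Matrix n n ℂ :=
  hA.1.eigenvectorUnitary.1 * diagonal ((↑) ∘ (fun i => Real.sqrt (hA.1.eigenvalues i))) *
    (star hA.1.eigenvectorUnitary : Matrix n n ℂ)

/-- The exponential integral function `E₁(x) = ∫ₓ^∞ e^{−t}/t dt`. -/
noncomputable def expIntegralE1 (x : ℝ) : ℝ := ∫ t in Set.Ioi x, Real.exp (-t) / t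

open MeasureTheory Set

lemma integrableOn_exp_neg_div_const_Ioi (a b : ℝ) :
    IntegrableOn (fun t => Real.exp (-t) / b) (Ioi a) := by
  have h := (exp_neg_integrableOn_Ioi a one_pos).div_const b
  simp only [neg_mul, one_mul] at h
  exact h

lemma integrableOn_exp_neg_div_Ioi {a : ℝ} (ha : 0 < a) :
    IntegrableOn (fun t => Real.exp (-t) / t) (Ioi a) := by
  refine Integrable.mono' (integrableOn_exp_neg_div_const_Ioi a a)
    (by fun_prop : Measurable fun t : ℝ => Real.exp (-t) / t).aestronglyMeasurable ?_
  refine (ae_restrict_iff' measurableSet_Ioi).2 (ae_of_all _ fun t (ht : a < t) => ?_)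
  rw [Real.norm_of_nonneg (div_nonneg (Real.exp_pos _).le (ha.trans ht).le)]
  exact div_le_div_of_nonneg_left (Real.exp_pos _).le ha ht.le

lemma expIntegralE1_le {x : ℝ} (hx : 0 < x) : expIntegralE1 x ≤ Real.exp (-x) / x := by
  calc expIntegralE1 x ≤ ∫ t in Ioi x, Real.exp (-t) / x :=
        setIntegral_mono_on (integrableOn_exp_neg_div_Ioi hx)
          (integrableOn_exp_neg_div_const_Ioi x x) measurableSet_Ioi
          fun t (ht : x < t) => div_le_div_of_nonneg_left (Real.exp_pos _).le hx ht.le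
    _ = Real.exp (-x) / x := by rw [integral_div, integral_exp_neg_Ioi]

lemma hasDerivAt_expIntegralE1 {x : ℝ} (hx : 0 < x) :
    HasDerivAt expIntegralE1 (-(Real.exp (-x) / x)) x := by
  have hc : 0 < x / 2 := half_pos hx
  have hint : IntervalIntegrable (fun t => Real.exp (-t) / t) volume (x / 2) x :=
    (intervalIntegrable_iff_integrableOn_Ioc_of_le (half_le_self hx.le)).2
      ((integrableOn_exp_neg_div_Ioi hc).mono_set Ioc_subset_Ioi_self)
  have hmeas : Measurable fun t : ℝ => Real.exp (-t) / t := by fun_prop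
  -- on `(0, ∞)`, `E₁ y = E₁ (x / 2) - ∫ t in x / 2..y, e⁻ᵗ / t`
  have hFTC := (intervalIntegral.integral_hasDerivAt_right hint
    hmeas.aestronglyMeasurable.stronglyMeasurableAtFilter
    (by fun_prop (disch := positivity))).const_sub (expIntegralE1 (x / 2))
  refine hFTC.congr_of_eventuallyEq ?_
  filter_upwards [eventually_gt_nhds hx] with y hy
  rw [← intervalIntegral.integral_Ioi_sub_Ioi' (integrableOn_exp_neg_div_Ioi hc)
    (integrableOn_exp_neg_div_Ioi hy)]
  unfold expIntegralE1
  ring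

lemma exp_mul_exp_neg_div (x : ℝ) : Real.exp x * (Real.exp (-x) / x) = x⁻¹ := by
  rw [mul_div_assoc', ← Real.exp_add, add_neg_cancel, Real.exp_zero, one_div]

lemma hasDerivAt_exp_mul_expIntegralE1 {x : ℝ} (hx : 0 < x) :
    HasDerivAt (fun y => Real.exp y * expIntegralE1 y)
      (Real.exp x * expIntegralE1 x - x⁻¹) x := by
  refine ((Real.hasDerivAt_exp x).mul (hasDerivAt_expIntegralE1 hx)).congr_deriv ?_
  rw [mul_neg, exp_mul_exp_neg_div, sub_eq_add_neg]

lemma concaveOn_log_add_exp_mul_expIntegralE1 :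
    ConcaveOn ℝ (Ioi 0) (fun x => Real.log x + Real.exp x * expIntegralE1 x) := by
  have hderiv {x : ℝ} (hx : 0 < x) :
      HasDerivAt (fun y => Real.log y + Real.exp y * expIntegralE1 y)
        (Real.exp x * expIntegralE1 x) x := by
    refine ((Real.hasDerivAt_log hx.ne').add
      (hasDerivAt_exp_mul_expIntegralE1 hx)).congr_deriv ?_
    ring
  refine concaveOn_of_hasDerivWithinAt2_nonpos (f' := fun x => Real.exp x * expIntegralE1 x)
    (f'' := fun x => Real.exp x * expIntegralE1 x - x⁻¹) (convex_Ioi 0) (fun x hx => (hderiv hx).continuousAt.continuousWithinAt) ?_ ?_ ?_ <;>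
    rw [interior_Ioi]
  · exact fun x hx => (hderiv hx).hasDerivWithinAt
  · exact fun x hx => (hasDerivAt_exp_mul_expIntegralE1 hx).hasDerivWithinAt
  intro x hx
  calc Real.exp x * expIntegralE1 x - x⁻¹ ≤ Real.exp x * (Real.exp (-x) / x) - x⁻¹ := by
        gcongr; exact expIntegralE1_le hx
    _ = 0 := by rw [exp_mul_exp_neg_div, sub_self]

/-- For `m = M` the slope is `0 / 0 = 0` and the bound reads `f m ≤ f m`. -/
theorem ConcaveOn.chord_le {s : Set ℝ} {f : ℝ → ℝ} (hf : ConcaveOn ℝ s f) {m M t : ℝ}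
    (hm : m ∈ s) (hM : M ∈ s) (hmt : m ≤ t) (htM : t ≤ M) :
    (f M - f m) / (M - m) * t + (f m - (f M - f m) / (M - m) * m) ≤ f t := by
  rcases (hmt.trans htM).eq_or_lt with rfl | hlt
  · obtain rfl := le_antisymm hmt htM
    simp
  have hMm : 0 < M - m := sub_pos.2 hlt
  have hcomb := hf.2 hm hM (div_nonneg (sub_nonneg.2 htM) hMm.le)
    (div_nonneg (sub_nonneg.2 hmt) hMm.le) (by field_simp; ring)
  have ht : (M - t) / (M - m) * m + (t - m) / (M - m) * M = t := by field_simp; ring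
  simp only [smul_eq_mul, ht] at hcomb
  refine le_of_eq_of_le ?_ hcomb
  field_simp
  ring

namespace Matrix

variable {n : Type*} [Fintype n]

lemma star_mulVec_dotProduct_mulVec (S : Matrix n n ℂ) (w : n → ℂ) :
    star (S *ᵥ w) ⬝ᵥ (S *ᵥ w) = star w ⬝ᵥ (Sᴴ * S) *ᵥ w := by
  rw [star_mulVec, ← dotProduct_mulVec, mulVec_mulVec]

lemma star_mulVec_dotProduct_mulVec_mulVec (S B : Matrix n n ℂ) (w : n → ℂ) :
    star (S *ᵥ w) ⬝ᵥ B *ᵥ (S *ᵥ w) = star w ⬝ᵥ (Sᴴ * B * S) *ᵥ w := by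
  rw [star_mulVec, ← dotProduct_mulVec, mulVec_mulVec, mulVec_mulVec, mul_assoc]

lemma re_star_dotProduct_self (x : n → ℂ) : (star x ⬝ᵥ x).re = ∑ i, ‖x i‖ ^ 2 := by
  simp only [dotProduct, Complex.re_sum, Pi.star_apply, Complex.star_def, Complex.mul_re,
    Complex.conj_re, Complex.conj_im, Complex.sq_norm, Complex.normSq_apply]
  exact Finset.sum_congr rfl fun i _ => by ring

variable [DecidableEq n]

lemma re_star_dotProduct_diagonal_mulVec (d : n → ℝ) (x : n → ℂ) :
    (star x ⬝ᵥ diagonal (RCLike.ofReal ∘ d) *ᵥ x).re = ∑ i, d i * ‖x i‖ ^ 2 := by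
  simp only [mulVec_diagonal, dotProduct, Complex.re_sum, Function.comp_apply, Pi.star_apply,
    Complex.star_def, Complex.mul_re, Complex.mul_im, Complex.conj_re, Complex.conj_im,
    Complex.coe_algebraMap, Complex.ofReal_re, Complex.ofReal_im, Complex.sq_norm,
    Complex.normSq_apply]
  exact Finset.sum_congr rfl fun i _ => by ring

lemma sum_norm_sq_mulVec_of_mem_unitaryGroup {U : Matrix n n ℂ} (hU : U ∈ unitaryGroup n ℂ)
    (x : n → ℂ) : ∑ i, ‖(U *ᵥ x) i‖ ^ 2 = ∑ i, ‖x i‖ ^ 2 := by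
  rw [← re_star_dotProduct_self, ← re_star_dotProduct_self, star_mulVec_dotProduct_mulVec,
    ← star_eq_conjTranspose, mem_unitaryGroup_iff'.mp hU, one_mulVec]

namespace IsHermitian

variable {A : Matrix n n ℂ} (hA : A.IsHermitian)
include hA

lemma re_star_dotProduct_mulVec_eigenvectorUnitary (x : n → ℂ) :
    (star (hA.eigenvectorUnitary *ᵥ x) ⬝ᵥ A *ᵥ (hA.eigenvectorUnitary *ᵥ x)).re =
      ∑ i, hA.eigenvalues i * ‖x i‖ ^ 2 := by
  rw [star_mulVec_dotProduct_mulVec_mulVec, ← star_eq_conjTranspose,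
    ← re_star_dotProduct_diagonal_mulVec, ← hA.conjStarAlgAut_star_eigenvectorUnitary,
    Unitary.conjStarAlgAut_star_apply]

lemma re_star_dotProduct_mulVec_mem_Icc (v : n → ℂ) :
    (star v ⬝ᵥ A *ᵥ v).re ∈ Icc ((⨅ i, hA.eigenvalues i) * ∑ i, ‖v i‖ ^ 2)
      ((⨆ i, hA.eigenvalues i) * ∑ i, ‖v i‖ ^ 2) := by
  set U := hA.eigenvectorUnitary
  obtain ⟨x, rfl⟩ : ∃ x, (U : Matrix n n ℂ) *ᵥ x = v :=
    ⟨star (U : Matrix n n ℂ) *ᵥ v, by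
      rw [mulVec_mulVec, mem_unitaryGroup_iff.mp U.2, one_mulVec]⟩
  rw [hA.re_star_dotProduct_mulVec_eigenvectorUnitary, sum_norm_sq_mulVec_of_mem_unitaryGroup U.2,
    Finset.mul_sum, Finset.mul_sum]
  exact ⟨Finset.sum_le_sum fun i _ => by gcongr; exact ciInf_le (finite_range _).bddBelow i,
    Finset.sum_le_sum fun i _ => by gcongr; exact le_ciSup (finite_range _).bddAbove i⟩

end IsHermitian

lemma PosDef.iInf_eigenvalues_pos [Nonempty n] {A : Matrix n n ℂ} (hA : A.PosDef) :
    0 < ⨅ i, hA.1.eigenvalues i := by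
  obtain ⟨i, hi⟩ := exists_eq_ciInf_of_finite (f := hA.1.eigenvalues)
  exact hi ▸ hA.eigenvalues_pos i

namespace PosSemidef

variable {A : Matrix n n ℂ} (hA : A.PosSemidef)
include hA

lemma isHermitian_sqrt : hA.sqrt.IsHermitian := by
  refine isHermitian_mul_mul_conjTranspose _ ?_
  rw [IsHermitian, diagonal_conjTranspose]
  congr 1
  funext i
  simp

lemma sqrt_mul_self : hA.sqrt * hA.sqrt = A := by
  set U : Matrix n n ℂ := ↑hA.1.eigenvectorUnitary
  set D : Matrix n n ℂ := diagonal ((↑) ∘ (fun i => √(hA.1.eigenvalues i)))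
  have hDD : D * D = diagonal ((↑) ∘ hA.1.eigenvalues) := by
    rw [diagonal_mul_diagonal]
    congr 1
    funext i
    simp [← Complex.ofReal_mul, Real.mul_self_sqrt (hA.eigenvalues_nonneg i)]
  conv_rhs => rw [hA.1.spectral_theorem, Unitary.conjStarAlgAut_apply]
  calc U * D * star U * (U * D * star U) = U * (D * (star U * U) * D) * star U := by
        simp only [mul_assoc]
    _ = U * diagonal ((↑) ∘ hA.1.eigenvalues) * star U := by
        rw [mem_unitaryGroup_iff'.mp hA.1.eigenvectorUnitary.2, mul_one, hDD]

end PosSemidef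

lemma PosDef.isUnit_det_sqrt {R : Matrix n n ℂ} (hR : R.PosDef) :
    IsUnit hR.posSemidef.sqrt.det :=
  (isUnit_iff_isUnit_det _).mp <| isUnit_of_mul_isUnit_left <|
    hR.posSemidef.sqrt_mul_self ▸ hR.isUnit

variable {H R C : Matrix n n ℂ}

lemma PosDef.inv_sqrt_mul_mul_inv_sqrt (hH : H.PosDef) (hR : R.PosDef) :
    (hR.posSemidef.sqrt⁻¹ * H * hR.posSemidef.sqrt⁻¹).PosDef := by
  have hS := hR.isUnit_det_sqrt
  nth_rewrite 1 [← (hR.posSemidef.isHermitian_sqrt.inv).eq]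
  exact hH.conjTranspose_mul_mul_same (mulVec_injective_of_isUnit
    ((isUnit_iff_isUnit_det _).mpr (isUnit_nonsing_inv_det _ hS)))

lemma re_star_dotProduct_mulVec_div_mem_Icc (hR : R.PosDef)
    (hC : C = hR.posSemidef.sqrt⁻¹ * H * hR.posSemidef.sqrt⁻¹) (hCherm : C.IsHermitian)
    {w : n → ℂ} (hw : w ≠ 0) :
    (star w ⬝ᵥ H *ᵥ w).re / (star w ⬝ᵥ R *ᵥ w).re ∈
      Icc (⨅ i, hCherm.eigenvalues i) (⨆ i, hCherm.eigenvalues i) := by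
  set S := hR.posSemidef.sqrt
  have hSherm : Sᴴ = S := hR.posSemidef.isHermitian_sqrt
  have hmul_inv : S * S⁻¹ = 1 := mul_nonsing_inv S hR.isUnit_det_sqrt
  have hinv_mul : S⁻¹ * S = 1 := nonsing_inv_mul S hR.isUnit_det_sqrt
  have hHu : star (S *ᵥ w) ⬝ᵥ C *ᵥ (S *ᵥ w) = star w ⬝ᵥ H *ᵥ w := by
    rw [star_mulVec_dotProduct_mulVec_mulVec, hSherm, hC]
    simp only [← mul_assoc, hmul_inv, one_mul]
    simp only [mul_assoc, hinv_mul, mul_one]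
  have hRu : ∑ i, ‖(S *ᵥ w) i‖ ^ 2 = (star w ⬝ᵥ R *ᵥ w).re := by
    rw [← re_star_dotProduct_self, star_mulVec_dotProduct_mulVec, hSherm,
      hR.posSemidef.sqrt_mul_self]
  have hRpos : 0 < (star w ⬝ᵥ R *ᵥ w).re :=
    (Complex.pos_iff.mp (hR.dotProduct_mulVec_pos hw)).1
  have hbounds := hCherm.re_star_dotProduct_mulVec_mem_Icc (S *ᵥ w)
  rw [hHu, hRu] at hbounds
  exact ⟨(le_div_iff₀ hRpos).2 hbounds.1, (div_le_iff₀ hRpos).2 hbounds.2⟩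

end Matrix

theorem chord_lower_bound_beamforming_objective_general
    {M : ℕ} (H R : Matrix (Fin M) (Fin M) ℂ)
    (hH : H.PosDef) (hR : R.PosDef) (α β : ℝ) (hα : 0 < α) (hβ : 0 < β)
    (C : Matrix (Fin M) (Fin M) ℂ)
    (hC : C = hR.posSemidef.sqrt⁻¹ * H * hR.posSemidef.sqrt⁻¹)
    (hCherm : C.IsHermitian)
    (m₀ M₀ m₁ M₁ : ℝ)
    (hm₀ : m₀ = ⨅ i, hH.1.eigenvalues i) (hM₀ : M₀ = ⨆ i, hH.1.eigenvalues i)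
    (hm₁ : m₁ = ⨅ i, hCherm.eigenvalues i) (hM₁ : M₁ = ⨆ i, hCherm.eigenvalues i)
    (f₀ f₁ : ℝ → ℝ)
    (hf₀ : ∀ x, f₀ x = α * Real.log x)
    (hf₁ : ∀ x, f₁ x = β * (Real.log x + Real.exp x * expIntegralE1 x))
    (κ₁ κ₂ μ₁ μ₂ : ℝ)
    (hκ₁ : κ₁ = (f₀ M₀ - f₀ m₀) / (M₀ - m₀)) (hκ₂ : κ₂ = f₀ m₀ - κ₁ * m₀)
    (hμ₁ : μ₁ = (f₁ M₁ - f₁ m₁) / (M₁ - m₁)) (hμ₂ : μ₂ = f₁ m₁ - μ₁ * m₁)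
    (w : Fin M → ℂ) (hw : ∑ i, ‖w i‖ ^ 2 = 1) :
    f₀ ((star w ⬝ᵥ H.mulVec w).re) +
        f₁ ((star w ⬝ᵥ H.mulVec w).re / (star w ⬝ᵥ R.mulVec w).re) ≥
      κ₁ * (star w ⬝ᵥ H.mulVec w).re + κ₂ +
        μ₁ * ((star w ⬝ᵥ H.mulVec w).re / (star w ⬝ᵥ R.mulVec w).re) + μ₂ := by
  obtain ⟨i, hwi⟩ := Finset.exists_ne_zero_of_sum_ne_zero (hw ▸ one_ne_zero)
  have : Nonempty (Fin M) := ⟨i⟩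
  have hw0 : w ≠ 0 := fun h => by simp [h] at hwi
  have hf₀conc : ConcaveOn ℝ (Ioi 0) f₀ :=
    funext hf₀ ▸ strictConcaveOn_log_Ioi.concaveOn.smul hα.le
  have hf₁conc : ConcaveOn ℝ (Ioi 0) f₁ :=
    funext hf₁ ▸ concaveOn_log_add_exp_mul_expIntegralE1.smul hβ.le
  have hm₀pos : 0 < m₀ := hm₀ ▸ hH.iInf_eigenvalues_pos
  have hm₁pos : 0 < m₁ := by
    rw [hm₁]
    exact (hC ▸ hH.inv_sqrt_mul_mul_inv_sqrt hR : C.PosDef).iInf_eigenvalues_pos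
  have hx := hH.1.re_star_dotProduct_mulVec_mem_Icc w
  rw [hw, mul_one, mul_one, ← hm₀, ← hM₀] at hx
  have hy := re_star_dotProduct_mulVec_div_mem_Icc hR hC hCherm hw0
  rw [← hm₁, ← hM₁] at hy
  have h₀ := hf₀conc.chord_le hm₀pos (hm₀pos.trans_le (hx.1.trans hx.2)) hx.1 hx.2
  have h₁ := hf₁conc.chord_le hm₁pos (hm₁pos.trans_le (hy.1.trans hy.2)) hy.1 hy.2
  subst hκ₁ hκ₂ hμ₁ hμ₂
  linarith

/-- Lemma 4 (chord lower bound): with `H, R` Hermitian positive definite, `f₀(x) = α log x`,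
`f₁(x) = β (log x + eˣ E₁(x))`, `m₀ < M₀` the extreme eigenvalues of `H` and `m₁ < M₁` those of
`R^{−1/2} H R^{−1/2}`, and `κ₁, κ₂, μ₁, μ₂` the chord coefficients of `f₀` on `[m₀, M₀]` and of
`f₁` on `[m₁, M₁]`, every unit vector `w` satisfies
`f₀(w^H H w) + f₁((w^H H w)/(w^H R w)) ≥ κ₁ (w^H H w) + κ₂ + μ₁ (w^H H w)/(w^H R w) + μ₂`. -/
theorem chord_lower_bound_beamforming_objective
    {M : ℕ} (hM : 1 ≤ M) (H R : Matrix (Fin M) (Fin M) ℂ)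
    (hH : H.PosDef) (hR : R.PosDef) (α β : ℝ) (hα : 0 < α) (hβ : 0 < β)
    (C : Matrix (Fin M) (Fin M) ℂ)
    (hC : C = hR.posSemidef.sqrt⁻¹ * H * hR.posSemidef.sqrt⁻¹)
    (hCherm : C.IsHermitian)
    (m₀ M₀ m₁ M₁ : ℝ)
    (hm₀ : m₀ = ⨅ i, hH.1.eigenvalues i) (hM₀ : M₀ = ⨆ i, hH.1.eigenvalues i)
    (hm₁ : m₁ = ⨅ i, hCherm.eigenvalues i) (hM₁ : M₁ = ⨆ i, hCherm.eigenvalues i)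
    (h₀lt : m₀ < M₀) (h₁lt : m₁ < M₁)
    (f₀ f₁ : ℝ → ℝ)
    (hf₀ : ∀ x, f₀ x = α * Real.log x)
    (hf₁ : ∀ x, f₁ x = β * (Real.log x + Real.exp x * expIntegralE1 x))
    (κ₁ κ₂ μ₁ μ₂ : ℝ)
    (hκ₁ : κ₁ = (f₀ M₀ - f₀ m₀) / (M₀ - m₀)) (hκ₂ : κ₂ = f₀ m₀ - κ₁ * m₀)
    (hμ₁ : μ₁ = (f₁ M₁ - f₁ m₁) / (M₁ - m₁)) (hμ₂ : μ₂ = f₁ m₁ - μ₁ * m₁)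
    (w : Fin M → ℂ) (hw : ∑ i, ‖w i‖ ^ 2 = 1) :
    f₀ ((star w ⬝ᵥ H.mulVec w).re) +
        f₁ ((star w ⬝ᵥ H.mulVec w).re / (star w ⬝ᵥ R.mulVec w).re) ≥
      κ₁ * (star w ⬝ᵥ H.mulVec w).re + κ₂ +
        μ₁ * ((star w ⬝ᵥ H.mulVec w).re / (star w ⬝ᵥ R.mulVec w).re) + μ₂ :=
  chord_lower_bound_beamforming_objective_general H R hH hR α β hα hβ C hC hCherm m₀ M₀ m₁ M₁ hm₀
    hM₀ hm₁ hM₁ f₀ f₁ hf₀ hf₁ κ₁ κ₂ μ₁ μ₂ hκ₁ hκ₂ hμ₁ hμ₂ w hw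
end

section
/- Let T > 0, a > 0, b ≥ 0, c₁ ≥ 0 and c₂ ∈ ℝ. Then the function τ ↦ ((T − τ)/T)·(c₁·Φ(a·√τ + b) + c₂), where Φ(x) = ∫_{−∞}^x (2π)^{−1/2} e^{−u²/2} du is the standard normal cumulative distribution function, is concave on the interval (0, T]. -/
/-!
On `[0, ∞)` the Gaussian density is decreasing, so `Φ` is concave and increasing there; composed
with the concave increasing map `τ ↦ a√τ + b ≥ 0` it stays concave and increasing. Multiplying a
nonnegative concave increasing function by the nonnegative, affine, decreasing factor `(T - τ)/T`
keeps concavity (Chebyshev-type product rule for oppositely monotone concave functions), and the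
`c₂`-term is affine.
-/

open MeasureTheory Real

/-- The standard normal cumulative distribution function
`Φ(x) = ∫_{−∞}^x (2π)^{−1/2} e^{−u²/2} du`. -/
noncomputable def gaussPhi (x : ℝ) : ℝ :=
  ∫ u in Set.Iio x, (Real.sqrt (2 * Real.pi))⁻¹ * Real.exp (-u ^ 2 / 2)

open ProbabilityTheory Set

lemma gaussPhi_eq_integral_Iic_gaussianPDFReal (x : ℝ) :
    gaussPhi x = ∫ u in Iic x, gaussianPDFReal 0 1 u := by
  simp [gaussPhi, gaussianPDFReal, integral_Iic_eq_integral_Iio]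

lemma gaussPhi_nonneg (x : ℝ) : 0 ≤ gaussPhi x := by
  rw [gaussPhi_eq_integral_Iic_gaussianPDFReal]
  exact setIntegral_nonneg measurableSet_Iic fun u _ ↦ gaussianPDFReal_nonneg 0 1 u

lemma hasDerivAt_gaussPhi (x : ℝ) : HasDerivAt gaussPhi (gaussianPDFReal 0 1 x) x := by
  have hint := integrable_gaussianPDFReal 0 1
  have hcont : Continuous (gaussianPDFReal 0 1) := by
    rw [gaussianPDFReal_def]; fun_prop
  have hsplit : gaussPhi = fun y ↦ gaussPhi 0 + ∫ u in (0 : ℝ)..y, gaussianPDFReal 0 1 u := by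
    funext y
    rw [gaussPhi_eq_integral_Iic_gaussianPDFReal, gaussPhi_eq_integral_Iic_gaussianPDFReal,
      ← intervalIntegral.integral_Iic_sub_Iic hint.integrableOn hint.integrableOn]
    ring
  rw [hsplit]
  exact (intervalIntegral.integral_hasDerivAt_right hint.intervalIntegrable
    (hcont.stronglyMeasurableAtFilter _ _) hcont.continuousAt).const_add _

lemma differentiable_gaussPhi : Differentiable ℝ gaussPhi :=
  fun x ↦ (hasDerivAt_gaussPhi x).differentiableAt

lemma deriv_gaussPhi : deriv gaussPhi = gaussianPDFReal 0 1 :=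
  funext fun x ↦ (hasDerivAt_gaussPhi x).deriv

lemma monotone_gaussPhi : Monotone gaussPhi :=
  monotone_of_deriv_nonneg differentiable_gaussPhi fun x ↦
    deriv_gaussPhi ▸ gaussianPDFReal_nonneg 0 1 x

lemma antitoneOn_gaussianPDFReal_Ici (μ : ℝ) (v : NNReal) :
    AntitoneOn (gaussianPDFReal μ v) (Ici μ) := by
  intro x hx y _ hxy
  simp only [gaussianPDFReal_def]
  gcongr
  exact sub_nonneg.2 hx

lemma concaveOn_gaussPhi_Ici : ConcaveOn ℝ (Ici 0) gaussPhi := by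
  refine AntitoneOn.concaveOn_of_deriv (convex_Ici 0)
    differentiable_gaussPhi.continuous.continuousOn differentiable_gaussPhi.differentiableOn ?_
  rw [deriv_gaussPhi, interior_Ici]
  exact (antitoneOn_gaussianPDFReal_Ici 0 1).mono Ioi_subset_Ici_self

lemma concaveOn_gaussPhi_mul_sqrt_add {a b : ℝ} (ha : 0 ≤ a) (hb : 0 ≤ b) :
    ConcaveOn ℝ (Ici 0) (fun τ ↦ gaussPhi (a * √τ + b)) := by
  have hinner : ConcaveOn ℝ (Ici 0) (fun τ ↦ a * √τ + b) :=
    (strictConcaveOn_sqrt.concaveOn.smul ha).add_const b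
  have himage : (fun τ ↦ a * √τ + b) '' Ici 0 ⊆ Ici 0 := by
    rintro _ ⟨τ, -, rfl⟩
    exact add_nonneg (mul_nonneg ha (sqrt_nonneg τ)) hb
  have himage_convex : Convex ℝ ((fun τ ↦ a * √τ + b) '' Ici 0) :=
    ((convex_Ici 0).isPreconnected.image _ (by fun_prop)).convex
  exact (concaveOn_gaussPhi_Ici.subset himage himage_convex).comp hinner
    (monotone_gaussPhi.monotoneOn _)

lemma concaveOn_mul_add (c d : ℝ) {s : Set ℝ} (hs : Convex ℝ s) :
    ConcaveOn ℝ s (fun x ↦ c * x + d) :=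
  ((LinearMap.mul ℝ ℝ c).concaveOn hs).add_const d

lemma ConcaveOn.sub_div_mul {s : Set ℝ} {g : ℝ → ℝ} {T : ℝ} (hT : 0 < T) (hsT : s ⊆ Iic T)
    (hg : ConcaveOn ℝ s g) (hg₀ : ∀ ⦃τ⦄, τ ∈ s → 0 ≤ g τ) (hgm : MonotoneOn g s) :
    ConcaveOn ℝ s (fun τ ↦ (T - τ) / T * g τ) := by
  have hℓ : ConcaveOn ℝ s (fun τ ↦ (T - τ) / T) := by
    refine (concaveOn_mul_add (-T⁻¹) 1 hg.1).congr fun τ _ ↦ ?_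
    field_simp
    ring
  have hℓ₀ : ∀ ⦃τ⦄, τ ∈ s → 0 ≤ (T - τ) / T := fun τ hτ ↦
    div_nonneg (sub_nonneg.2 (hsT hτ)) hT.le
  have hℓm : AntitoneOn (fun τ ↦ (T - τ) / T) s := fun x _ y _ hxy ↦ by
    dsimp only; gcongr
  exact hℓ.mul hg hℓ₀ hg₀ (hℓm.antivaryOn hgm)

/-- Concavity of the interweave sensing objective: for `T, a > 0`, `b ≥ 0`, `c₁ ≥ 0`, `c₂ ∈ ℝ`,
the function `τ ↦ ((T − τ)/T)(c₁ Φ(a√τ + b) + c₂)` is concave on `(0, T]`. -/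
theorem concaveOn_interweave_objective
    (T a b c₁ c₂ : ℝ) (hT : 0 < T) (ha : 0 < a) (hb : 0 ≤ b) (hc₁ : 0 ≤ c₁) :
    ConcaveOn ℝ (Set.Ioc (0 : ℝ) T)
      (fun τ => ((T - τ) / T) * (c₁ * gaussPhi (a * Real.sqrt τ + b) + c₂)) := by
  have hΦ : ConcaveOn ℝ (Ioc 0 T) (fun τ ↦ c₁ * gaussPhi (a * √τ + b)) :=
    ((concaveOn_gaussPhi_mul_sqrt_add ha.le hb).subset (fun _ hτ ↦ hτ.1.le)
      (convex_Ioc 0 T)).smul hc₁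
  have hΦm : MonotoneOn (fun τ ↦ c₁ * gaussPhi (a * √τ + b)) (Ioc 0 T) := fun x _ y _ hxy ↦
    mul_le_mul_of_nonneg_left (monotone_gaussPhi (by gcongr)) hc₁
  have hΦ₀ : ∀ ⦃τ⦄, τ ∈ Ioc 0 T → 0 ≤ c₁ * gaussPhi (a * √τ + b) := fun τ _ ↦
    mul_nonneg hc₁ (gaussPhi_nonneg _)
  have hsum := (hΦ.sub_div_mul hT Ioc_subset_Iic_self hΦ₀ hΦm).add
    (concaveOn_mul_add (-(c₂ / T)) c₂ (convex_Ioc 0 T))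
  refine hsum.congr fun τ _ ↦ ?_
  simp only [Pi.add_apply]
  field_simp
  ring
end
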